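/- Let β̂, β₀ ∈ ℝ^p with ‖β₀‖₀ ≤ s ≥ 1, and let β̂^ν be the hard-thresholded vector β̂^ν_j = β̂_j·1{|β̂_j| ≥ ν_j} with positive thresholds ν_j and ν_max = max_j ν_j. Then ‖β̂^ν − β₀‖₂ ≤ ‖β̂ − β₀‖₂ + 2√s·ν_max + 2‖β̂ − β₀‖₁/√s. -/

import Mathlib

/-!
Thresholding moves a coordinate of `β̂` by at most `ν_max`, and only when `|β̂_j| < ν_j`. On the at
most `s` coordinates of the support of `β₀` this costs `ν_max²` each; off the support `β₀_j = 0`,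
so the cost `β̂_j² ≤ ν_max |β̂_j - β₀_j|` is paid by the `ℓ₁` error. Hence
`‖β̂^ν - β̂‖₂² ≤ s ν_max² + ν_max ‖β̂ - β₀‖₁ ≤ (√s ν_max + ‖β̂ - β₀‖₁ / (2√s))²`, and the triangle
inequality finishes the proof.
-/

open Finset

noncomputable def hardThreshold (t x : ℝ) : ℝ := if t ≤ |x| then x else 0

theorem hardThreshold_sub_self_sq_le_sq {t m : ℝ} (htm : t ≤ m) (x : ℝ) :
    (hardThreshold t x - x) ^ 2 ≤ m ^ 2 := by
  unfold hardThreshold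
  split_ifs with h
  · rw [sub_self, zero_pow two_ne_zero]; positivity
  · rw [zero_sub, neg_sq, ← sq_abs]
    have : |x| < m := (not_le.1 h).trans_le htm
    nlinarith [abs_nonneg x]

theorem hardThreshold_sub_self_sq_le_mul_abs {t m : ℝ} (htm : t ≤ m) (hm : 0 ≤ m) (x : ℝ) :
    (hardThreshold t x - x) ^ 2 ≤ m * |x| := by
  unfold hardThreshold
  split_ifs with h
  · rw [sub_self, zero_pow two_ne_zero]; exact mul_nonneg hm (abs_nonneg x)
  · rw [zero_sub, neg_sq, ← sq_abs, sq]
    have : |x| < m := (not_le.1 h).trans_le htm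
    exact mul_le_mul_of_nonneg_right this.le (abs_nonneg x)

theorem sum_sq_hardThreshold_sub_le {ι : Type*} [Fintype ι] {ν : ι → ℝ} {m : ℝ}
    (hν : ∀ j, ν j ≤ m) (hm : 0 ≤ m) (x b : ι → ℝ) :
    ∑ j, (hardThreshold (ν j) (x j) - x j) ^ 2 ≤
      #{j | b j ≠ 0} * m ^ 2 + m * ∑ j, |x j - b j| := by
  have hpoint : ∀ j, (hardThreshold (ν j) (x j) - x j) ^ 2 ≤
      (if b j ≠ 0 then m ^ 2 else 0) + m * |x j - b j| := by
    intro j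
    by_cases hb : b j = 0
    · simpa [hb] using hardThreshold_sub_self_sq_le_mul_abs (hν j) hm (x j)
    · simp only [hb, ne_eq, not_false_eq_true, if_true]
      have := hardThreshold_sub_self_sq_le_sq (hν j) (x j)
      nlinarith [abs_nonneg (x j - b j)]
  calc ∑ j, (hardThreshold (ν j) (x j) - x j) ^ 2
      ≤ ∑ j, ((if b j ≠ 0 then m ^ 2 else 0) + m * |x j - b j|) :=
        sum_le_sum fun j _ => hpoint j
    _ = #{j | b j ≠ 0} * m ^ 2 + m * ∑ j, |x j - b j| := by
        rw [sum_add_distrib, ← sum_filter, sum_const, nsmul_eq_mul, ← mul_sum]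

theorem sqrt_mul_sq_add_mul_le {s m L : ℝ} (hs : 0 < s) (hm : 0 ≤ m) (hL : 0 ≤ L) :
    √(s * m ^ 2 + m * L) ≤ √s * m + L / (2 * √s) := by
  have hs' : 0 < √s := Real.sqrt_pos.2 hs
  have hsq : (√s * m + L / (2 * √s)) ^ 2 = s * m ^ 2 + m * L + (L / (2 * √s)) ^ 2 := by
    field_simp
    rw [Real.sq_sqrt hs.le]
    ring
  rw [Real.sqrt_le_iff, hsq]
  exact ⟨by positivity, le_add_of_nonneg_right (sq_nonneg _)⟩

theorem sqrt_sum_sq_sub_le {ι : Type*} [Fintype ι] (u v w : ι → ℝ) :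
    √(∑ j, (u j - w j) ^ 2) ≤ √(∑ j, (u j - v j) ^ 2) + √(∑ j, (v j - w j) ^ 2) := by
  have h := dist_triangle (WithLp.toLp 2 u : EuclideanSpace ℝ ι) (WithLp.toLp 2 v)
    (WithLp.toLp 2 w)
  simpa only [EuclideanSpace.dist_eq, PiLp.toLp_apply, Real.dist_eq, sq_abs] using h

theorem stmt5 (p s : ℕ) (hs : 1 ≤ s) (βh β₀ ν : Fin p → ℝ)
    (hν : ∀ j, 0 < ν j)
    (h0 : (Finset.univ.filter fun j => β₀ j ≠ 0).card ≤ s)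
    (νmax : ℝ) (hνmax : IsGreatest (Set.range ν) νmax)
    (βν : Fin p → ℝ) (hβν : ∀ j, βν j = if ν j ≤ |βh j| then βh j else 0) :
    Real.sqrt (∑ j, (βν j - β₀ j) ^ 2) ≤
      Real.sqrt (∑ j, (βh j - β₀ j) ^ 2) + 2 * Real.sqrt s * νmax +
        2 * (∑ j, |βh j - β₀ j|) / Real.sqrt s := by
  obtain ⟨⟨j₀, rfl⟩, hνle⟩ := hνmax
  have hνmax : 0 ≤ ν j₀ := (hν j₀).le
  have hs' : (0 : ℝ) < s := by exact_mod_cast hs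
  obtain rfl : βν = fun j => hardThreshold (ν j) (βh j) := funext hβν
  set L := ∑ j, |βh j - β₀ j|
  have hL : 0 ≤ L := sum_nonneg fun j _ => abs_nonneg _
  have hcard : (#{j | β₀ j ≠ 0} : ℝ) ≤ s := by exact_mod_cast h0
  calc √(∑ j, (hardThreshold (ν j) (βh j) - β₀ j) ^ 2)
      ≤ √(∑ j, (βh j - β₀ j) ^ 2) + √(∑ j, (hardThreshold (ν j) (βh j) - βh j) ^ 2) := by
        rw [add_comm]; exact sqrt_sum_sq_sub_le _ βh _
    _ ≤ √(∑ j, (βh j - β₀ j) ^ 2) + √(s * ν j₀ ^ 2 + ν j₀ * L) := by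
        gcongr
        refine (sum_sq_hardThreshold_sub_le (fun j => hνle ⟨j, rfl⟩) hνmax βh β₀).trans ?_
        gcongr
    _ ≤ √(∑ j, (βh j - β₀ j) ^ 2) + (√s * ν j₀ + L / (2 * √s)) := by
        gcongr; exact sqrt_mul_sq_add_mul_le hs' hνmax hL
    _ ≤ √(∑ j, (βh j - β₀ j) ^ 2) + 2 * √s * ν j₀ + 2 * L / √s := by
        have hroot : 0 < √s := Real.sqrt_pos.2 hs'
        have : L / (2 * √s) ≤ 2 * L / √s :=
          div_le_div₀ (by positivity) (by linarith) hroot (by linarith)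
        linarith [mul_nonneg hroot.le hνmax]
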